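/- arXiv:2303.11706 — 3 statements merged into one kernel-verified Lean document; each statement's English description precedes it below -/
import Mathlib

section
/- For any probability measures P and Q on a common measurable space and any real-valued random variable X that is integrable under both P and Q, (1/5)·(1 − H(P,Q)²)²·|E_P[X] − E_Q[X]| ≤ max( E_P[|X − E_P[X]|], E_Q[|X − E_Q[X]|] ). -/
/-!
Let `p, q` be the densities of `P, Q` with respect to `P + Q`, `ρ = ∫ √p √q` their affinity
(so `1 - H(P,Q)² = ρ`) and `s = ∫ min p q` their overlap. Pointwise AM-GM gives
`2tρ ≤ t² s + 2` for every real `t`, so `ρ² ≤ 2s` by the discriminant. Integrating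
`|a - b| min p q ≤ |x - a| p + |x - b| q` gives
`|E_P X - E_Q X| s ≤ E_P|X - E_P X| + E_Q|X - E_Q X|`, and the two bounds combine.
-/

open MeasureTheory

/-- The squared Hellinger distance `H(P,Q)²` between two measures on the same
measurable space, defined via the densities with respect to the dominating measure `P + Q`. -/
noncomputable def sqHellinger {Ω : Type*} [MeasurableSpace Ω] (P Q : Measure Ω) : ℝ :=
  (1 / 2) * ∫ ω, (Real.sqrt ((P.rnDeriv (P + Q) ω).toReal)
    - Real.sqrt ((Q.rnDeriv (P + Q) ω).toReal)) ^ 2 ∂(P + Q)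

lemma two_mul_mul_sqrt_mul_sqrt_le {a b : ℝ} (ha : 0 ≤ a) (hb : 0 ≤ b) (t : ℝ) :
    2 * t * (√a * √b) ≤ t ^ 2 * min a b + (a + b) := by
  have hsa := Real.sq_sqrt ha
  have hsb := Real.sq_sqrt hb
  rcases le_total a b with hab | hab
  · rw [min_eq_left hab]
    nlinarith [sq_nonneg (t * √a - √b)]
  · rw [min_eq_right hab]
    nlinarith [sq_nonneg (t * √b - √a)]

lemma abs_sub_mul_min_le (x a b : ℝ) {u v : ℝ} (hu : 0 ≤ u) (hv : 0 ≤ v) :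
    |a - b| * min u v ≤ |x - a| * u + |x - b| * v :=
  calc |a - b| * min u v ≤ (|x - a| + |x - b|) * min u v := by
        gcongr
        rw [abs_sub_comm x a]
        exact abs_sub_le a x b
    _ ≤ |x - a| * u + |x - b| * v := by
        rw [add_mul]
        gcongr
        exacts [min_le_left u v, min_le_right u v]

section Densities

variable {α : Type*} [MeasurableSpace α] {ν : Measure α} {p q : α → ℝ}

lemma integrable_sqrt_mul_sqrt (hp : Integrable p ν) (hq : Integrable q ν)
    (hp0 : ∀ x, 0 ≤ p x) (hq0 : ∀ x, 0 ≤ q x) :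
    Integrable (fun x => √(p x) * √(q x)) ν := by
  refine (hp.add hq).mono'
    ((Real.continuous_sqrt.comp_aestronglyMeasurable hp.1).mul
      (Real.continuous_sqrt.comp_aestronglyMeasurable hq.1))
    (Filter.Eventually.of_forall fun x => ?_)
  rw [Real.norm_of_nonneg (by positivity), Pi.add_apply]
  have := two_mul_mul_sqrt_mul_sqrt_le (hp0 x) (hq0 x) 1
  linarith [min_le_left (p x) (q x), hq0 x]

lemma sq_integral_sqrt_mul_sqrt_le (hp : Integrable p ν) (hq : Integrable q ν)
    (hp0 : ∀ x, 0 ≤ p x) (hq0 : ∀ x, 0 ≤ q x) :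
    (∫ x, √(p x) * √(q x) ∂ν) ^ 2 ≤ (∫ x, p x ∂ν + ∫ x, q x ∂ν) * ∫ x, min (p x) (q x) ∂ν := by
  set ρ := ∫ x, √(p x) * √(q x) ∂ν
  set s := ∫ x, min (p x) (q x) ∂ν
  have hmin : Integrable (fun x => min (p x) (q x)) ν := hp.inf hq
  have hpq : Integrable (fun x => p x + q x) ν := hp.add hq
  have hquad : ∀ t : ℝ, 2 * t * ρ ≤ t ^ 2 * s + (∫ x, p x ∂ν + ∫ x, q x ∂ν) := by
    intro t
    calc 2 * t * ρ = ∫ x, 2 * t * (√(p x) * √(q x)) ∂ν := (integral_const_mul _ _).symm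
      _ ≤ ∫ x, t ^ 2 * min (p x) (q x) + (p x + q x) ∂ν :=
          integral_mono ((integrable_sqrt_mul_sqrt hp hq hp0 hq0).const_mul _)
            ((hmin.const_mul _).add hpq)
            fun x => two_mul_mul_sqrt_mul_sqrt_le (hp0 x) (hq0 x) t
      _ = t ^ 2 * s + (∫ x, p x ∂ν + ∫ x, q x ∂ν) := by
          rw [integral_add (hmin.const_mul _) hpq, integral_const_mul,
            integral_add hp hq]
  have := discrim_le_zero (a := s) (b := -2 * ρ) (c := ∫ x, p x ∂ν + ∫ x, q x ∂ν)
    fun t => by nlinarith [hquad t]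
  unfold discrim at this
  nlinarith

lemma integral_sqrt_sub_sqrt_sq (hp : Integrable p ν) (hq : Integrable q ν)
    (hp0 : ∀ x, 0 ≤ p x) (hq0 : ∀ x, 0 ≤ q x) :
    ∫ x, (√(p x) - √(q x)) ^ 2 ∂ν
      = ∫ x, p x ∂ν + ∫ x, q x ∂ν - 2 * ∫ x, √(p x) * √(q x) ∂ν :=
  calc ∫ x, (√(p x) - √(q x)) ^ 2 ∂ν = ∫ x, p x + q x - 2 * (√(p x) * √(q x)) ∂ν := by
        congr 1 with x
        rw [sub_sq, Real.sq_sqrt (hp0 x), Real.sq_sqrt (hq0 x)]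
        ring
    _ = ∫ x, p x ∂ν + ∫ x, q x ∂ν - 2 * ∫ x, √(p x) * √(q x) ∂ν := by
        rw [integral_sub (f := fun x => p x + q x) (hp.add hq)
          ((integrable_sqrt_mul_sqrt hp hq hp0 hq0).const_mul 2),
          integral_add hp hq, integral_const_mul]

lemma abs_sub_mul_integral_min_le (X : α → ℝ) (a b : ℝ) (hp : Integrable p ν)
    (hq : Integrable q ν) (hp0 : ∀ x, 0 ≤ p x) (hq0 : ∀ x, 0 ≤ q x)
    (hXp : Integrable (fun x => p x * |X x - a|) ν)
    (hXq : Integrable (fun x => q x * |X x - b|) ν) :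
    |a - b| * ∫ x, min (p x) (q x) ∂ν ≤ ∫ x, p x * |X x - a| ∂ν + ∫ x, q x * |X x - b| ∂ν :=
  calc |a - b| * ∫ x, min (p x) (q x) ∂ν = ∫ x, |a - b| * min (p x) (q x) ∂ν :=
        (integral_const_mul _ _).symm
    _ ≤ ∫ x, p x * |X x - a| + q x * |X x - b| ∂ν :=
        integral_mono ((hp.inf hq).const_mul _) (hXp.add hXq) fun x => by
          simpa only [mul_comm (p x), mul_comm (q x)] using
            abs_sub_mul_min_le (X x) a b (hp0 x) (hq0 x)
    _ = ∫ x, p x * |X x - a| ∂ν + ∫ x, q x * |X x - b| ∂ν := integral_add hXp hXq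

end Densities

section Measures

variable {Ω : Type*} [MeasurableSpace Ω]

lemma abs_sub_mul_integral_min_rnDeriv_le {P Q ν : Measure Ω} [IsFiniteMeasure P]
    [IsFiniteMeasure Q] [SigmaFinite ν] (hP : P ≪ ν) (hQ : Q ≪ ν) {X : Ω → ℝ}
    (hXP : Integrable X P) (hXQ : Integrable X Q) (a b : ℝ) :
    |a - b| * ∫ ω, min (P.rnDeriv ν ω).toReal (Q.rnDeriv ν ω).toReal ∂ν
      ≤ ∫ ω, |X ω - a| ∂P + ∫ ω, |X ω - b| ∂Q := by
  have hXa : Integrable (fun ω => |X ω - a|) P := (hXP.sub (integrable_const a)).abs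
  have hXb : Integrable (fun ω => |X ω - b|) Q := (hXQ.sub (integrable_const b)).abs
  rw [← integral_rnDeriv_smul hP, ← integral_rnDeriv_smul hQ]
  exact abs_sub_mul_integral_min_le X a b Measure.integrable_toReal_rnDeriv
    Measure.integrable_toReal_rnDeriv (fun _ => ENNReal.toReal_nonneg)
    (fun _ => ENNReal.toReal_nonneg) ((integrable_rnDeriv_smul_iff hP).2 hXa)
    ((integrable_rnDeriv_smul_iff hQ).2 hXb)

variable (P Q : Measure Ω) [IsProbabilityMeasure P] [IsProbabilityMeasure Q]

lemma integral_toReal_rnDeriv_left : ∫ ω, (P.rnDeriv (P + Q) ω).toReal ∂(P + Q) = 1 := by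
  rw [Measure.integral_toReal_rnDeriv ((Measure.AbsolutelyContinuous.refl P).add_right Q),
    probReal_univ]

lemma integral_toReal_rnDeriv_right : ∫ ω, (Q.rnDeriv (P + Q) ω).toReal ∂(P + Q) = 1 := by
  rw [Measure.integral_toReal_rnDeriv ((Measure.AbsolutelyContinuous.refl Q).add_right' P),
    probReal_univ]

lemma one_sub_sqHellinger :
    1 - sqHellinger P Q
      = ∫ ω, √(P.rnDeriv (P + Q) ω).toReal * √(Q.rnDeriv (P + Q) ω).toReal ∂(P + Q) := by
  rw [sqHellinger, integral_sqrt_sub_sqrt_sq Measure.integrable_toReal_rnDeriv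
    Measure.integrable_toReal_rnDeriv (fun _ => ENNReal.toReal_nonneg)
    (fun _ => ENNReal.toReal_nonneg), integral_toReal_rnDeriv_left, integral_toReal_rnDeriv_right]
  ring

lemma sq_one_sub_sqHellinger_le :
    (1 - sqHellinger P Q) ^ 2
      ≤ 2 * ∫ ω, min (P.rnDeriv (P + Q) ω).toReal (Q.rnDeriv (P + Q) ω).toReal ∂(P + Q) := by
  have h := sq_integral_sqrt_mul_sqrt_le (Measure.integrable_toReal_rnDeriv (μ := P) (ν := P + Q))
    (Measure.integrable_toReal_rnDeriv (μ := Q))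
    (fun _ => ENNReal.toReal_nonneg) (fun _ => ENNReal.toReal_nonneg)
  rw [integral_toReal_rnDeriv_left, integral_toReal_rnDeriv_right, one_add_one_eq_two] at h
  rwa [one_sub_sqHellinger]

end Measures

theorem stmt1 {Ω : Type*} [MeasurableSpace Ω] (P Q : Measure Ω)
    [IsProbabilityMeasure P] [IsProbabilityMeasure Q]
    (X : Ω → ℝ) (hXP : Integrable X P) (hXQ : Integrable X Q) :
    (1 / 5) * (1 - sqHellinger P Q) ^ 2 * |(∫ ω, X ω ∂P) - ∫ ω, X ω ∂Q|
      ≤ max (∫ ω, |X ω - ∫ x, X x ∂P| ∂P) (∫ ω, |X ω - ∫ x, X x ∂Q| ∂Q) := by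
  set madP := ∫ ω, |X ω - ∫ x, X x ∂P| ∂P
  set madQ := ∫ ω, |X ω - ∫ x, X x ∂Q| ∂Q
  set overlap := ∫ ω, min (P.rnDeriv (P + Q) ω).toReal (Q.rnDeriv (P + Q) ω).toReal ∂(P + Q)
  have hmeans : |(∫ ω, X ω ∂P) - ∫ ω, X ω ∂Q| * overlap ≤ madP + madQ :=
    abs_sub_mul_integral_min_rnDeriv_le ((Measure.AbsolutelyContinuous.refl P).add_right Q)
      ((Measure.AbsolutelyContinuous.refl Q).add_right' P) hXP hXQ _ _
  have hmadP : 0 ≤ madP := integral_nonneg fun _ => abs_nonneg _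
  calc (1 / 5) * (1 - sqHellinger P Q) ^ 2 * |(∫ ω, X ω ∂P) - ∫ ω, X ω ∂Q|
      ≤ (1 / 5) * (2 * overlap) * |(∫ ω, X ω ∂P) - ∫ ω, X ω ∂Q| := by
        gcongr
        exact sq_one_sub_sqHellinger_le P Q
    _ = (2 / 5) * (|(∫ ω, X ω ∂P) - ∫ ω, X ω ∂Q| * overlap) := by ring
    _ ≤ (2 / 5) * (madP + madQ) := by gcongr
    _ ≤ max madP madQ := by linarith [le_max_left madP madQ, le_max_right madP madQ]
end

section
/- Let P and Q be probability measures on a common measurable space, both dominated by a σ-finite measure ν with ν-densities p and q, and let X be a real-valued random variable integrable under both P and Q. With the convention 0/0 := 0, one has (1 − H(P,Q)²) · |E_P[X] − E_Q[X]| ≤ ‖(p − q)/(p ∧ q)‖_{L∞(ν)} · max( E_P[|X − E_P[X]|], E_Q[|X − E_Q[X]|] ), where (p ∧ q)(ω) = min(p(ω), q(ω)) and ‖·‖_{L∞(ν)} denotes the ν-essential supremum of the absolute value. -/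
open MeasureTheory ENNReal

theorem tsub_inf_add_tsub_inf {α : Type*} [AddCommMonoid α] [LinearOrder α]
    [CanonicallyOrderedAdd α] [Sub α] [OrderedSub α] (x y : α) :
    (x - x ⊓ y) + (y - x ⊓ y) = (x - y) ⊔ (y - x) := by
  rcases le_total x y with h | h <;>
    simp [inf_eq_left.mpr h, inf_eq_right.mpr h, tsub_eq_zero_of_le h]

namespace MeasureTheory

variable {Ω : Type*} [MeasurableSpace Ω]

theorem sqHellinger_nonneg (P Q : Measure Ω) : 0 ≤ sqHellinger P Q :=
  mul_nonneg (by norm_num) (integral_nonneg fun _ => sq_nonneg _)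

theorem sqHellinger_eq_one_of_mutuallySingular {P Q : Measure Ω} [IsProbabilityMeasure P]
    [IsProbabilityMeasure Q] (hPQ : P ⟂ₘ Q) : sqHellinger P Q = 1 := by
  have hP : P ≪ P + Q := Measure.absolutelyContinuous_of_le (Measure.le_add_right le_rfl)
  have hQ : Q ≪ P + Q := Measure.absolutelyContinuous_of_le (Measure.le_add_left le_rfl)
  have h_disjoint : ∀ᵐ ω ∂(P + Q), P.rnDeriv (P + Q) ω = 0 ∨ Q.rnDeriv (P + Q) ω = 0 := by
    rw [ae_add_measure_iff]
    exact ⟨(Measure.rnDeriv_eq_zero_of_mutuallySingular hPQ.symm hP).mono fun _ h => .inr h,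
      (Measure.rnDeriv_eq_zero_of_mutuallySingular hPQ hQ).mono fun _ h => .inl h⟩
  have h_integrand : ∀ᵐ ω ∂(P + Q),
      (Real.sqrt (P.rnDeriv (P + Q) ω).toReal - Real.sqrt (Q.rnDeriv (P + Q) ω).toReal) ^ 2
        = (P.rnDeriv (P + Q) ω).toReal + (Q.rnDeriv (P + Q) ω).toReal := by
    filter_upwards [h_disjoint] with ω h
    rcases h with h | h <;> simp [h, Real.sq_sqrt ENNReal.toReal_nonneg]
  rw [sqHellinger, integral_congr_ae h_integrand,
    integral_add Measure.integrable_toReal_rnDeriv Measure.integrable_toReal_rnDeriv,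
    Measure.integral_toReal_rnDeriv hP, Measure.integral_toReal_rnDeriv hQ]
  norm_num

theorem mutuallySingular_of_ae_eq_const {P Q : Measure Ω} {X : Ω → ℝ} {a b : ℝ} (hab : a ≠ b)
    (ha : X =ᵐ[P] fun _ => a) (hb : X =ᵐ[Q] fun _ => b) : P ⟂ₘ Q := by
  refine Measure.MutuallySingular.mk ha hb fun ω _ => ?_
  by_cases h : X ω = a
  · exact .inr fun hb => hab (h.symm.trans hb)
  · exact .inl h

theorem ae_eq_const_of_integral_abs_sub_eq_zero {μ : Measure Ω} [IsFiniteMeasure μ] {X : Ω → ℝ}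
    {c : ℝ} (hX : Integrable X μ) (h : ∫ ω, |X ω - c| ∂μ = 0) : X =ᵐ[μ] fun _ => c := by
  filter_upwards [(integral_eq_zero_iff_of_nonneg (fun ω => abs_nonneg (X ω - c))
    (hX.sub (integrable_const c)).abs).mp h] with ω hω
  exact sub_eq_zero.mp (abs_eq_zero.mp hω)

theorem withDensity_le_essSup_div_smul_withDensity {ν : Measure Ω} {f g : Ω → ℝ≥0∞}
    (hg : ∀ᵐ ω ∂ν, g ω ≠ ∞) (hfg : essSup (fun ω => f ω / g ω) ν ≠ ∞) :
    ν.withDensity f ≤ essSup (fun ω => f ω / g ω) ν • ν.withDensity g := by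
  rw [← withDensity_smul' _ _ hfg]
  refine withDensity_mono ?_
  filter_upwards [ae_le_essSup (fun ω => f ω / g ω), hg] with ω hle hgω
  exact (ENNReal.div_le_iff_le_mul (.inr hfg) (.inl hgω)).mp hle

theorem withDensity_eq_add_withDensity_tsub {ν : Measure Ω} {f g : Ω → ℝ≥0∞}
    (hg : Measurable g) (hgf : g ≤ f) :
    ν.withDensity f = ν.withDensity g + ν.withDensity (f - g) := by
  rw [← withDensity_add_left hg, add_tsub_cancel_of_le hgf]

theorem enorm_integral_add_measure_sub_le {E : Type*} [NormedAddCommGroup E] [NormedSpace ℝ E]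
    {μ₀ μ₁ μ₂ : Measure Ω} {Y : Ω → E} (h₁ : Integrable Y (μ₀ + μ₁))
    (h₂ : Integrable Y (μ₀ + μ₂)) :
    ‖∫ ω, Y ω ∂(μ₀ + μ₁) - ∫ ω, Y ω ∂(μ₀ + μ₂)‖ₑ ≤ ∫⁻ ω, ‖Y ω‖ₑ ∂(μ₁ + μ₂) := by
  obtain ⟨h₀, h₁⟩ := integrable_add_measure.mp h₁
  obtain ⟨-, h₂⟩ := integrable_add_measure.mp h₂
  rw [integral_add_measure h₀ h₁, integral_add_measure h₀ h₂, add_sub_add_left_eq_sub,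
    lintegral_add_measure]
  exact enorm_sub_le.trans
    (add_le_add (enorm_integral_le_lintegral_enorm _) (enorm_integral_le_lintegral_enorm _))

/-- Both measures share the part `ν.withDensity (p ⊓ q)`, which cancels in the difference. -/
theorem enorm_integral_withDensity_sub_le {E : Type*} [NormedAddCommGroup E] [NormedSpace ℝ E]
    {ν : Measure Ω} {p q : Ω → ℝ≥0∞} (hp : Measurable p) (hq : Measurable q) {Y : Ω → E}
    (hYp : Integrable Y (ν.withDensity p)) (hYq : Integrable Y (ν.withDensity q)) :
    ‖∫ ω, Y ω ∂ν.withDensity p - ∫ ω, Y ω ∂ν.withDensity q‖ₑ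
      ≤ ∫⁻ ω, ‖Y ω‖ₑ ∂ν.withDensity (fun ω => (p ω - q ω) ⊔ (q ω - p ω)) := by
  have hpq : Measurable (p ⊓ q) := hp.inf hq
  rw [withDensity_eq_add_withDensity_tsub hpq inf_le_left] at hYp ⊢
  rw [withDensity_eq_add_withDensity_tsub hpq inf_le_right] at hYq ⊢
  refine (enorm_integral_add_measure_sub_le hYp hYq).trans_eq ?_
  rw [← withDensity_add_left (hp.sub hpq)]
  congr 2 with ω
  exact tsub_inf_add_tsub_inf (p ω) (q ω)

theorem ae_ne_top_of_isFiniteMeasure_withDensity {ν : Measure Ω} {p : Ω → ℝ≥0∞}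
    (hp : AEMeasurable p ν) [IsFiniteMeasure (ν.withDensity p)] : ∀ᵐ ω ∂ν, p ω ≠ ∞ := by
  refine (ae_lt_top' hp ?_).mono fun _ h => h.ne
  simpa [withDensity_apply _ MeasurableSet.univ] using measure_ne_top (ν.withDensity p) Set.univ

theorem ofReal_abs_integral_sub_le_essSup_mul {ν : Measure Ω} {p q : Ω → ℝ≥0∞}
    (hp : Measurable p) (hq : Measurable q) [IsProbabilityMeasure (ν.withDensity p)]
    [IsProbabilityMeasure (ν.withDensity q)] {X : Ω → ℝ} (hXp : Integrable X (ν.withDensity p))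
    (hXq : Integrable X (ν.withDensity q))
    (hM : essSup (fun ω => ((p ω - q ω) ⊔ (q ω - p ω)) / (p ω ⊓ q ω)) ν ≠ ∞) :
    ENNReal.ofReal |∫ ω, X ω ∂ν.withDensity p - ∫ ω, X ω ∂ν.withDensity q|
      ≤ essSup (fun ω => ((p ω - q ω) ⊔ (q ω - p ω)) / (p ω ⊓ q ω)) ν
        * ENNReal.ofReal (∫ ω, |X ω - ∫ x, X x ∂ν.withDensity p| ∂ν.withDensity p) := by
  set P := ν.withDensity p
  set M := essSup (fun ω => ((p ω - q ω) ⊔ (q ω - p ω)) / (p ω ⊓ q ω)) ν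
  set Y := fun ω => X ω - ∫ x, X x ∂P
  have hYp : Integrable Y P := hXp.sub (integrable_const _)
  have hYq : Integrable Y (ν.withDensity q) := hXq.sub (integrable_const _)
  have h_centered : ∫ ω, Y ω ∂P - ∫ ω, Y ω ∂ν.withDensity q
      = ∫ ω, X ω ∂P - ∫ ω, X ω ∂ν.withDensity q := by
    simp only [Y, integral_sub hXp (integrable_const _), integral_sub hXq (integrable_const _),
      integral_const, probReal_univ, one_smul]
    ring
  have h_inf_ne_top : ∀ᵐ ω ∂ν, p ω ⊓ q ω ≠ ∞ :=
    (ae_ne_top_of_isFiniteMeasure_withDensity hp.aemeasurable).mono fun _ h =>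
      (inf_le_left.trans_lt h.lt_top).ne
  have h_dom : ν.withDensity (fun ω => (p ω - q ω) ⊔ (q ω - p ω)) ≤ M • P :=
    (withDensity_le_essSup_div_smul_withDensity h_inf_ne_top hM).trans
      (by gcongr; exact withDensity_mono (.of_forall fun _ => inf_le_left))
  calc ENNReal.ofReal |∫ ω, X ω ∂P - ∫ ω, X ω ∂ν.withDensity q|
      = ‖∫ ω, Y ω ∂P - ∫ ω, Y ω ∂ν.withDensity q‖ₑ := by
        rw [h_centered, Real.enorm_eq_ofReal_abs]
    _ ≤ ∫⁻ ω, ‖Y ω‖ₑ ∂ν.withDensity (fun ω => (p ω - q ω) ⊔ (q ω - p ω)) :=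
        enorm_integral_withDensity_sub_le hp hq hYp hYq
    _ ≤ ∫⁻ ω, ‖Y ω‖ₑ ∂(M • P) := lintegral_mono' h_dom le_rfl
    _ = M * ENNReal.ofReal (∫ ω, |Y ω| ∂P) := by
        rw [lintegral_smul_measure, ← ofReal_integral_norm_eq_lintegral_enorm hYp]
        rfl

end MeasureTheory

/- In `ℝ≥0∞`, `x / 0 = ∞` for `x ≠ 0` and `0 / 0 = 0`, and `(p ω - q ω) ⊔ (q ω - p ω)` is
`|p ω - q ω|` computed with truncated subtraction. -/
theorem stmt5_general {Ω : Type*} [MeasurableSpace Ω] (ν : Measure Ω)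
    (p q : Ω → ℝ≥0∞) (hp : Measurable p) (hq : Measurable q)
    (P Q : Measure Ω) (hP : P = ν.withDensity p) (hQ : Q = ν.withDensity q)
    [IsProbabilityMeasure P] [IsProbabilityMeasure Q]
    (X : Ω → ℝ) (hXP : Integrable X P) (hXQ : Integrable X Q) :
    ENNReal.ofReal ((1 - sqHellinger P Q) * |(∫ ω, X ω ∂P) - ∫ ω, X ω ∂Q|)
      ≤ essSup (fun ω => ((p ω - q ω) ⊔ (q ω - p ω)) / (p ω ⊓ q ω)) ν
        * ENNReal.ofReal
            (max (∫ ω, |X ω - ∫ x, X x ∂P| ∂P) (∫ ω, |X ω - ∫ x, X x ∂Q| ∂Q)) := by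
  set M := essSup (fun ω => ((p ω - q ω) ⊔ (q ω - p ω)) / (p ω ⊓ q ω)) ν
  obtain hM | hM := ne_or_eq M ∞
  · subst hP hQ
    calc _ ≤ ENNReal.ofReal |(∫ ω, X ω ∂ν.withDensity p) - ∫ ω, X ω ∂ν.withDensity q| :=
          ofReal_le_ofReal (mul_le_of_le_one_left (abs_nonneg _)
            (by linarith [sqHellinger_nonneg (ν.withDensity p) (ν.withDensity q)]))
      _ ≤ M * ENNReal.ofReal (∫ ω, |X ω - ∫ x, X x ∂ν.withDensity p| ∂ν.withDensity p) :=
          ofReal_abs_integral_sub_le_essSup_mul hp hq hXP hXQ hM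
      _ ≤ _ := by gcongr; exact le_max_left _ _
  obtain hpos | hzero := lt_or_ge 0 (max (∫ ω, |X ω - ∫ x, X x ∂P| ∂P)
    (∫ ω, |X ω - ∫ x, X x ∂Q| ∂Q))
  · rw [hM, top_mul (ofReal_pos.mpr hpos).ne']
    exact le_top
  have hP0 : ∫ ω, |X ω - ∫ x, X x ∂P| ∂P = 0 :=
    le_antisymm ((le_max_left _ _).trans hzero) (integral_nonneg fun _ => abs_nonneg _)
  have hQ0 : ∫ ω, |X ω - ∫ x, X x ∂Q| ∂Q = 0 :=
    le_antisymm ((le_max_right _ _).trans hzero) (integral_nonneg fun _ => abs_nonneg _)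
  obtain hab | hab := eq_or_ne (∫ ω, X ω ∂P) (∫ ω, X ω ∂Q)
  · simp [hab]
  · rw [sqHellinger_eq_one_of_mutuallySingular (mutuallySingular_of_ae_eq_const hab
      (ae_eq_const_of_integral_abs_sub_eq_zero hXP hP0)
      (ae_eq_const_of_integral_abs_sub_eq_zero hXQ hQ0))]
    simp

theorem stmt5 {Ω : Type*} [MeasurableSpace Ω] (ν : Measure Ω) [SigmaFinite ν]
    (p q : Ω → ℝ≥0∞) (hp : Measurable p) (hq : Measurable q)
    (P Q : Measure Ω) (hP : P = ν.withDensity p) (hQ : Q = ν.withDensity q)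
    [IsProbabilityMeasure P] [IsProbabilityMeasure Q]
    (X : Ω → ℝ) (hXP : Integrable X P) (hXQ : Integrable X Q) :
    ENNReal.ofReal ((1 - sqHellinger P Q) * |(∫ ω, X ω ∂P) - ∫ ω, X ω ∂Q|)
      ≤ essSup (fun ω => ((p ω - q ω) ⊔ (q ω - p ω)) / (p ω ⊓ q ω)) ν
        * ENNReal.ofReal
            (max (∫ ω, |X ω - ∫ x, X x ∂P| ∂P) (∫ ω, |X ω - ∫ x, X x ∂Q| ∂Q)) :=
  stmt5_general ν p q hp hq P Q hP hQ X hXP hXQ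
end

section
/- Let Ω = {ω_1, …, ω_M} be a finite set, and let P ≠ Q be two probability measures on Ω with probability mass functions p_j := P({ω_j}) and q_j := Q({ω_j}). With the convention 0/0 := 0, choose j* maximizing |p_j − q_j|/(p_j ∨ q_j) over j = 1, …, M, and define the random variable X* := 1(ω = ω_{j*}). Then max( E_P[|X* − E_P[X*]|], E_Q[|X* − E_Q[X*]|] ) ≤ (2 / max_{j} |p_j − q_j|/(p_j ∨ q_j)) · |E_P[X*] − E_Q[X*]|. -/
/-!
For an event `s` of probability `a`, the indicator `1_s` deviates from its mean by `1 - a` on `s`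
and by `a` off `s`, so its mean absolute deviation is `2 a (1 - a) ≤ 2 a`. For `s = {j*}` the
right-hand side of the bound is `2 (p ∨ q) / |p - q| · |p - q| = 2 (p ∨ q)` at `j*`, which dominates
both deviations. The ratio at `j*` is positive because it is maximal and `P ≠ Q` makes it positive
at some point; without that, `2 / 0 = 0` would collapse the bound.
-/

open MeasureTheory

lemma integral_abs_indicator_one_sub_measureReal {Ω : Type*} [MeasurableSpace Ω]
    (μ : Measure Ω) [IsProbabilityMeasure μ] {s : Set Ω} (hs : MeasurableSet s) :
    ∫ ω, |s.indicator 1 ω - μ.real s| ∂μ = 2 * μ.real s * (1 - μ.real s) := by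
  set a := μ.real s
  have ha0 : 0 ≤ a := measureReal_nonneg
  have ha1 : a ≤ 1 := measureReal_le_one
  have hpoint : ∀ ω, |s.indicator (1 : Ω → ℝ) ω - a| = (1 - 2 * a) * s.indicator 1 ω + a := by
    intro ω
    by_cases h : ω ∈ s
    · rw [Set.indicator_of_mem h, Pi.one_apply, abs_of_nonneg (by linarith)]; ring
    · rw [Set.indicator_of_notMem h, abs_of_nonpos (by linarith)]; ring
  have hint : Integrable (s.indicator (1 : Ω → ℝ)) μ := (integrable_const 1).indicator hs
  simp_rw [hpoint]
  rw [integral_add (hint.const_mul _) (integrable_const a),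
    integral_const_mul, integral_indicator_one hs, integral_const, probReal_univ, one_smul]
  ring

lemma abs_sub_div_max_pos {p q : ℝ} (hp : 0 ≤ p) (hq : 0 ≤ q) (h : p ≠ q) :
    0 < |p - q| / max p q :=
  div_pos (abs_pos.2 (sub_ne_zero.2 h)) (lt_max_iff.2 (by contrapose! h; linarith))

theorem stmt8 (M : ℕ) (P Q : Measure (Fin M))
    [IsProbabilityMeasure P] [IsProbabilityMeasure Q] (hPQ : P ≠ Q)
    (p q : Fin M → ℝ)
    (hp : ∀ j, p j = (P {j}).toReal) (hq : ∀ j, q j = (Q {j}).toReal)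
    (jstar : Fin M)
    (hjstar : ∀ j, |p j - q j| / max (p j) (q j)
      ≤ |p jstar - q jstar| / max (p jstar) (q jstar))
    (Xstar : Fin M → ℝ) (hXstar : Xstar = fun ω => if ω = jstar then 1 else 0) :
    max (∫ ω, |Xstar ω - ∫ x, Xstar x ∂P| ∂P) (∫ ω, |Xstar ω - ∫ x, Xstar x ∂Q| ∂Q)
      ≤ (2 / (|p jstar - q jstar| / max (p jstar) (q jstar)))
        * |(∫ ω, Xstar ω ∂P) - ∫ ω, Xstar ω ∂Q| := by
  have hp' : ∀ j, p j = P.real {j} := hp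
  have hq' : ∀ j, q j = Q.real {j} := hq
  have hX : Xstar = ({jstar} : Set (Fin M)).indicator 1 := by
    ext ω; simp [hXstar, Set.indicator_apply]
  obtain ⟨j, hj⟩ : ∃ j, p j ≠ q j := by
    by_contra! h
    exact hPQ (Measure.ext_of_measureReal_singleton fun j => by rw [← hp', ← hq', h j])
  have hratio := (abs_sub_div_max_pos (by simp [hp']) (by simp [hq']) hj).trans_le (hjstar j)
  have hdiff : |p jstar - q jstar| ≠ 0 := by rintro h; simp [h] at hratio
  simp_rw [hX, integral_indicator_one (measurableSet_singleton jstar),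
    integral_abs_indicator_one_sub_measureReal _ (measurableSet_singleton jstar), ← hp', ← hq',
    div_div_eq_mul_div, div_mul_cancel₀ _ hdiff]
  have hp1 : p jstar ≤ 1 := hp' jstar ▸ measureReal_le_one
  have hq1 : q jstar ≤ 1 := hq' jstar ▸ measureReal_le_one
  have hp0 : 0 ≤ p jstar := hp' jstar ▸ measureReal_nonneg
  have hq0 : 0 ≤ q jstar := hq' jstar ▸ measureReal_nonneg
  exact max_le (by nlinarith [le_max_left (p jstar) (q jstar)])
    (by nlinarith [le_max_right (p jstar) (q jstar)])
end
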